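/- arXiv:1502.01953 — 5 statements merged into one kernel-verified Lean document; each statement's English description precedes it below -/
import Mathlib

section
/- Let h : ℝ^d → Set ℝ^d satisfy sup_{w ∈ h(x)} ‖w‖ ≤ K(1 + ‖x‖) for all x, define h_c(x) := {y : c•y ∈ h(c•x)} for c ≥ 1, and h_∞(x) := cl(Liminf_{c→∞} h_c(x)) taken along integer c. Then every y ∈ h_∞(x) satisfies ‖y‖ ≤ K(1 + ‖x‖), and consequently h_∞(x) is compact. -/
open Filter Topology

theorem stmt_6 (d : ℕ) (h : EuclideanSpace ℝ (Fin d) → Set (EuclideanSpace ℝ (Fin d)))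
    (K : ℝ) (hK : 0 < K)
    (hgrowth : ∀ x, ∀ w ∈ h x, ‖w‖ ≤ K * (1 + ‖x‖))
    (hc : ℝ → EuclideanSpace ℝ (Fin d) → Set (EuclideanSpace ℝ (Fin d)))
    (hc_def : ∀ c x, hc c x = {y | c • y ∈ h (c • x)})
    (hinf : EuclideanSpace ℝ (Fin d) → Set (EuclideanSpace ℝ (Fin d)))
    (hinf_def : ∀ x, hinf x = closure {y |
      Tendsto (fun n : ℕ => EMetric.infEdist y (hc (n + 1 : ℕ) x)) atTop (𝓝 0)}) :
    ∀ x, (∀ y ∈ hinf x, ‖y‖ ≤ K * (1 + ‖x‖)) ∧ IsCompact (hinf x) := by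
  intro x
  set R : ℝ := K * (1 + ‖x‖) with hR
  -- every element of hc c x with c ≥ 1 has norm ≤ R
  have hball : ∀ (n : ℕ) (z : EuclideanSpace ℝ (Fin d)),
      z ∈ hc (n + 1 : ℕ) x → ‖z‖ ≤ R := by
    intro n z hz
    rw [hc_def] at hz
    have hgz := hgrowth _ _ hz
    have hn0 : (0 : ℝ) ≤ (n : ℝ) := Nat.cast_nonneg n
    have hcpos : (0 : ℝ) < ((n : ℝ) + 1) := by linarith
    have hnorm : ‖((n : ℝ) + 1) • z‖ = ((n : ℝ) + 1) * ‖z‖ := by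
      rw [norm_smul, Real.norm_of_nonneg hcpos.le]
    have hnormx : ‖((n : ℝ) + 1) • x‖ = ((n : ℝ) + 1) * ‖x‖ := by
      rw [norm_smul, Real.norm_of_nonneg hcpos.le]
    push_cast at hgz
    rw [hnorm, hnormx] at hgz
    have : ((n : ℝ) + 1) * ‖z‖ ≤ ((n : ℝ) + 1) * (K * (1 + ‖x‖)) := by
      calc ((n : ℝ) + 1) * ‖z‖ ≤ K * (1 + ((n : ℝ) + 1) * ‖x‖) := hgz
        _ ≤ K * (((n : ℝ) + 1) + ((n : ℝ) + 1) * ‖x‖) := by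
            apply mul_le_mul_of_nonneg_left _ hK.le
            linarith
        _ = ((n : ℝ) + 1) * (K * (1 + ‖x‖)) := by ring
    exact le_of_mul_le_mul_left this hcpos
  -- the liminf set is contained in the closed ball of radius R
  have hsub : {y | Tendsto (fun n : ℕ => EMetric.infEdist y (hc (n + 1 : ℕ) x))
      atTop (𝓝 0)} ⊆ Metric.closedBall 0 R := by
    intro y hy
    simp only [Metric.mem_closedBall, dist_zero_right]
    refine le_of_forall_pos_le_add (fun ε hε => ?_)
    have hlt : ∀ᶠ n : ℕ in atTop,
        EMetric.infEdist y (hc (n + 1 : ℕ) x) < ENNReal.ofReal ε :=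
      hy.eventually_lt_const (by simpa using hε)
    obtain ⟨n, hn⟩ := hlt.exists
    rw [EMetric.infEdist, EMetric.infEdist_lt_iff] at hn
    obtain ⟨z, hz, hdz⟩ := hn
    have hd : dist y z < ε := by
      rwa [edist_dist, ENNReal.ofReal_lt_ofReal_iff hε] at hdz
    calc ‖y‖ ≤ ‖z‖ + dist y z := by
          rw [dist_eq_norm]
          have := norm_add_le (y - z) z
          simp only [sub_add_cancel] at this
          linarith
      _ ≤ R + ε := add_le_add (hball n z hz) hd.le
  have hclosed : hinf x ⊆ Metric.closedBall 0 R := by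
    rw [hinf_def]
    exact closure_minimal hsub Metric.isClosed_closedBall
  refine ⟨fun y hy => by simpa [dist_zero_right] using hclosed hy, ?_⟩
  exact (isCompact_closedBall 0 R).of_isClosed_subset
    (by rw [hinf_def]; exact isClosed_closure) hclosed
end

section
/- Let h : ℝ^d → Set ℝ^d with growth bound sup_{w∈h(x)}‖w‖ ≤ K(1+‖x‖), h_c(x) := {y : c•y ∈ h(c•x)} for c ≥ 1, and h_∞(x) := cl(Liminf_{n→∞} h_n(x)). Assume the following sequential limit property (A5): whenever c_n ↑ ∞ are integers, x_n → x, y_n → y, and y_n ∈ h_{c_n}(x_n) for all n, then y ∈ h_∞(x). Then h_∞ has closed graph: if x_n → x, y_n → y with y_n ∈ h_∞(x_n) for all n, then y ∈ h_∞(x). -/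
open Filter Topology

theorem stmt_7 (d : ℕ) (h : EuclideanSpace ℝ (Fin d) → Set (EuclideanSpace ℝ (Fin d)))
    (K : ℝ) (hK : 0 < K)
    (hgrowth : ∀ x, ∀ w ∈ h x, ‖w‖ ≤ K * (1 + ‖x‖))
    (hc : ℝ → EuclideanSpace ℝ (Fin d) → Set (EuclideanSpace ℝ (Fin d)))
    (hc_def : ∀ c x, hc c x = {y | c • y ∈ h (c • x)})
    (hinf : EuclideanSpace ℝ (Fin d) → Set (EuclideanSpace ℝ (Fin d)))
    (hinf_def : ∀ x, hinf x = closure {y |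
      Tendsto (fun n : ℕ => EMetric.infEdist y (hc (n + 1 : ℕ) x)) atTop (𝓝 0)})
    (A5 : ∀ (c : ℕ → ℕ) (x y : ℕ → EuclideanSpace ℝ (Fin d))
        (x₀ y₀ : EuclideanSpace ℝ (Fin d)),
      StrictMono c → (∀ n, 1 ≤ c n) →
      Tendsto x atTop (𝓝 x₀) → Tendsto y atTop (𝓝 y₀) →
      (∀ n, y n ∈ hc (c n) (x n)) → y₀ ∈ hinf x₀) :
    ∀ (x y : ℕ → EuclideanSpace ℝ (Fin d)) (x₀ y₀ : EuclideanSpace ℝ (Fin d)),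
      Tendsto x atTop (𝓝 x₀) → Tendsto y atTop (𝓝 y₀) →
      (∀ n, y n ∈ hinf (x n)) → y₀ ∈ hinf x₀ := by
  intro x y x₀ y₀ hx hy hmem
  -- Step 1: approximate y n from the Liminf set
  have h1 : ∀ n : ℕ, ∃ y',
      Tendsto (fun m : ℕ => EMetric.infEdist y' (hc (m + 1 : ℕ) (x n))) atTop (𝓝 0) ∧
      dist y' (y n) < 1 / (n + 1) := by
    intro n
    have hm := hmem n
    rw [hinf_def] at hm
    obtain ⟨y', hy', hd⟩ := Metric.mem_closure_iff.mp hm (1 / (n + 1)) (by positivity)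
    exact ⟨y', hy', by rwa [dist_comm]⟩
  choose y' hy'tend hy'dist using h1
  -- Step 2: eventually the infEdist is small
  have h2 : ∀ n : ℕ, ∃ N : ℕ, ∀ m ≥ N,
      EMetric.infEdist (y' n) (hc (m + 1 : ℕ) (x n)) < ENNReal.ofReal (1 / (n + 1)) := by
    intro n
    have hpos : (0 : ENNReal) < ENNReal.ofReal (1 / (n + 1)) := by
      rw [ENNReal.ofReal_pos]; positivity
    exact eventually_atTop.mp ((hy'tend n).eventually (gt_mem_nhds hpos))
  choose N hN using h2
  -- Step 3: strictly monotone scales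
  let c : ℕ → ℕ := fun n => Nat.rec (N 0) (fun k ih => max (N (k + 1)) (ih + 1)) n
  have cmono : StrictMono c := by
    apply strictMono_nat_of_lt_succ
    intro n
    exact lt_of_lt_of_le (Nat.lt_succ_self _) (le_max_right _ _)
  have cge : ∀ n, N n ≤ c n := by
    intro n
    cases n with
    | zero => exact le_refl _
    | succ k => exact le_max_left _ _
  -- Step 4: pick witnesses
  have h3 : ∀ n : ℕ, ∃ z ∈ hc ((c n : ℕ) + 1 : ℕ) (x n),
      edist (y' n) z < ENNReal.ofReal (1 / (n + 1)) :=
    fun n => EMetric.infEdist_lt_iff.mp (hN n (c n) (cge n))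
  choose z hz hzd using h3
  -- Step 5: z tends to y₀
  have hdz : ∀ n : ℕ, dist (y n) (z n) < 2 / (n + 1) := by
    intro n
    have h1 : dist (y' n) (z n) < 1 / (n + 1) := by
      rw [← edist_lt_ofReal]; exact hzd n
    calc dist (y n) (z n) ≤ dist (y n) (y' n) + dist (y' n) (z n) := dist_triangle _ _ _
      _ < 1 / (n + 1) + 1 / (n + 1) := by
          have := hy'dist n; rw [dist_comm] at this; linarith
      _ = 2 / (n + 1) := by ring
  have hztend : Tendsto z atTop (𝓝 y₀) := by
    apply hy.congr_dist
    apply squeeze_zero (fun n => dist_nonneg) (fun n => (hdz n).le)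
    have : Tendsto (fun n : ℕ => 2 / ((n : ℝ) + 1)) atTop (𝓝 0) := by
      apply Tendsto.div_atTop tendsto_const_nhds
      exact tendsto_atTop_add_const_right _ _ tendsto_natCast_atTop_atTop
    exact this
  -- Step 6: apply A5
  refine A5 (fun n => c n + 1) x z x₀ y₀ ?_ (fun n => Nat.le_add_left 1 (c n)) hx hztend ?_
  · intro a b hab
    simpa using cmono hab
  · intro n
    exact_mod_cast hz n
end

section
/- Let h : ℝ^d → Set ℝ^d satisfy the growth bound with constant K, h_c(x) := {y : c•y ∈ h(c•x)}, and define h_∞(x) := closedConvexHull(Limsup_{n→∞} h_n(x)). Assume (A5): whenever integers c_n ↑ ∞, x_n → x, y_n → y, and y_n ∈ h_{c_n}(x_n), then y ∈ h_∞(x). Then h_∞ has closed graph: x_n → x, y_n → y, y_n ∈ h_∞(x_n) for all n implies y ∈ h_∞(x). -/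
open Filter Topology


/-- Auxiliary recursively defined strictly increasing sequence of scales. -/
def stmt10_cseq (g : ℕ → ℕ → ℕ) : ℕ → ℕ
  | 0 => g 0 0 + 1
  | n + 1 => g (n + 1) (stmt10_cseq g n) + 1

theorem stmt_10 (d : ℕ) (h : EuclideanSpace ℝ (Fin d) → Set (EuclideanSpace ℝ (Fin d)))
    (K : ℝ) (hK : 0 < K)
    (hgrowth : ∀ x, ∀ w ∈ h x, ‖w‖ ≤ K * (1 + ‖x‖))
    (hc : ℝ → EuclideanSpace ℝ (Fin d) → Set (EuclideanSpace ℝ (Fin d)))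
    (hc_def : ∀ c x, hc c x = {y | c • y ∈ h (c • x)})
    (hinf : EuclideanSpace ℝ (Fin d) → Set (EuclideanSpace ℝ (Fin d)))
    (hinf_def : ∀ x, hinf x = closure (convexHull ℝ
      {y | liminf (fun n : ℕ => EMetric.infEdist y (hc (n + 1 : ℕ) x)) atTop = 0}))
    (A5 : ∀ (c : ℕ → ℕ) (x y : ℕ → EuclideanSpace ℝ (Fin d))
        (x₀ y₀ : EuclideanSpace ℝ (Fin d)),
      StrictMono c → (∀ n, 1 ≤ c n) →
      Tendsto x atTop (𝓝 x₀) → Tendsto y atTop (𝓝 y₀) →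
      (∀ n, y n ∈ hc (c n) (x n)) → y₀ ∈ hinf x₀) :
    ∀ (x y : ℕ → EuclideanSpace ℝ (Fin d)) (x₀ y₀ : EuclideanSpace ℝ (Fin d)),
      Tendsto x atTop (𝓝 x₀) → Tendsto y atTop (𝓝 y₀) →
      (∀ n, y n ∈ hinf (x n)) → y₀ ∈ hinf x₀ := by

  intro x y x₀ y₀ hx hy hmem
  set S : EuclideanSpace ℝ (Fin d) → Set (EuclideanSpace ℝ (Fin d)) := fun x =>
    {y | liminf (fun n : ℕ => EMetric.infEdist y (hc (n + 1 : ℕ) x)) atTop = 0} with hS_def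
  -- Core lemma: limits of points of S (x' n) along x' → x₀ lie in hinf x₀.
  have core : ∀ (x' z' : ℕ → EuclideanSpace ℝ (Fin d)) (z : EuclideanSpace ℝ (Fin d)), Tendsto x' atTop (𝓝 x₀) →
      Tendsto z' atTop (𝓝 z) → (∀ n, z' n ∈ S (x' n)) → z ∈ hinf x₀ := by
    intro x' z' z hx' hz' hSmem
    have H : ∀ n m : ℕ, ∃ k, m < k + 1 ∧
        EMetric.infEdist (z' n) (hc ((k + 1 : ℕ) : ℝ) (x' n)) < ENNReal.ofReal (1 / (n + 1)) := by
      intro n m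
      have h0 := hSmem n
      simp only [hS_def, Set.mem_setOf_eq] at h0
      have hfreq : ∃ᶠ k in atTop,
          EMetric.infEdist (z' n) (hc ((k + 1 : ℕ) : ℝ) (x' n)) < ENNReal.ofReal (1 / (n + 1)) :=
        frequently_lt_of_liminf_lt isCobounded_ge_of_top
          (by rw [h0]; exact ENNReal.ofReal_pos.2 (by positivity))
      obtain ⟨k, hk, hk2⟩ := frequently_atTop.1 hfreq (m + 1)
      exact ⟨k, by omega, hk2⟩
    choose g hg1 hg2 using H
    set c : ℕ → ℕ := stmt10_cseq g with hc_def'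
    have hc0 : c 0 = g 0 0 + 1 := rfl
    have hcs : ∀ n, c (n + 1) = g (n + 1) (c n) + 1 := fun n => rfl
    have hcmono : StrictMono c := by
      apply strictMono_nat_of_lt_succ
      intro n
      rw [hcs]
      exact hg1 (n + 1) (c n)
    have hc1 : ∀ n, 1 ≤ c n := by
      intro n
      cases n with
      | zero => rw [hc0]; omega
      | succ m => rw [hcs]; omega
    have hdist : ∀ n, EMetric.infEdist (z' n) (hc ((c n : ℝ)) (x' n))
        < ENNReal.ofReal (1 / (n + 1)) := by
      intro n
      cases n with
      | zero => exact hg2 0 0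
      | succ m => rw [hcs]; exact hg2 (m + 1) (c m)
    have hw : ∀ n, ∃ w ∈ hc ((c n : ℝ)) (x' n), edist (z' n) w < ENNReal.ofReal (1 / (n + 1)) :=
      fun n => EMetric.infEdist_lt_iff.1 (hdist n)
    choose w hw1 hw2 using hw
    have hwz : Tendsto w atTop (𝓝 z) := by
      rw [tendsto_iff_dist_tendsto_zero]
      apply squeeze_zero (fun n => dist_nonneg)
        (g := fun n : ℕ => 1 / (n + 1 : ℝ) + dist (z' n) z)
      · intro n
        calc dist (w n) z ≤ dist (w n) (z' n) + dist (z' n) z := dist_triangle _ _ _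
          _ ≤ 1 / (n + 1 : ℝ) + dist (z' n) z := by
              have := (edist_lt_ofReal.1 (hw2 n)).le
              rw [dist_comm]
              linarith
      · have h1 : Tendsto (fun n : ℕ => 1 / (n + 1 : ℝ)) atTop (𝓝 0) :=
          tendsto_one_div_add_atTop_nhds_zero_nat
        have h2 : Tendsto (fun n => dist (z' n) z) atTop (𝓝 0) :=
          tendsto_iff_dist_tendsto_zero.1 hz'
        simpa using h1.add h2
    exact A5 c x' w x₀ z hcmono hc1 hx' hwz hw1
  -- Boundedness: points of S x' have norm ≤ K * (1 + ‖x'‖).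
  have Sbound : ∀ (x' zz : EuclideanSpace ℝ (Fin d)), zz ∈ S x' → ‖zz‖ ≤ K * (1 + ‖x'‖) := by
    intro x' zz hzz
    simp only [hS_def, Set.mem_setOf_eq] at hzz
    have H : ∀ m : ℕ, ∃ w : EuclideanSpace ℝ (Fin d), ‖w‖ ≤ K * (1 + ‖x'‖) ∧ dist zz w < 1 / (m + 1) := by
      intro m
      have hfreq : ∃ᶠ k in atTop,
          EMetric.infEdist zz (hc ((k + 1 : ℕ) : ℝ) x') < ENNReal.ofReal (1 / (m + 1)) :=
        frequently_lt_of_liminf_lt isCobounded_ge_of_top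
          (by rw [hzz]; exact ENNReal.ofReal_pos.2 (by positivity))
      obtain ⟨k, -, hk2⟩ := frequently_atTop.1 hfreq 0
      obtain ⟨w, hw1, hw2⟩ := EMetric.infEdist_lt_iff.1 hk2
      refine ⟨w, ?_, edist_lt_ofReal.1 hw2⟩
      rw [hc_def, Set.mem_setOf_eq] at hw1
      have hb := hgrowth _ _ hw1
      have hk1 : (1 : ℝ) ≤ ((k + 1 : ℕ) : ℝ) := by exact_mod_cast Nat.one_le_iff_ne_zero.2 (by omega)
      rw [norm_smul, norm_smul] at hb
      simp only [Real.norm_eq_abs, abs_of_nonneg (by linarith : (0:ℝ) ≤ ((k + 1 : ℕ) : ℝ))] at hb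
      nlinarith [norm_nonneg w, norm_nonneg x']
    choose w hwb hwd using H
    have hwz : Tendsto w atTop (𝓝 zz) := by
      rw [tendsto_iff_dist_tendsto_zero]
      apply squeeze_zero (fun n => dist_nonneg) (g := fun n : ℕ => 1 / (n + 1 : ℝ))
      · intro n
        rw [dist_comm]
        exact (hwd n).le
      · exact tendsto_one_div_add_atTop_nhds_zero_nat
    exact le_of_tendsto (hwz.norm) (Eventually.of_forall hwb)
  -- Main argument by contradiction via a separating hyperplane.
  by_contra hy0
  rw [hinf_def] at hy0
  have hconv : Convex ℝ (closure (convexHull ℝ (S x₀))) := (convex_convexHull ℝ _).closure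
  obtain ⟨f, u, hfy, hfs⟩ := geometric_hahn_banach_point_closed hconv isClosed_closure hy0
  -- Eventually f (y n) < u.
  have hev : ∀ᶠ n in atTop, f (y n) < u :=
    (f.continuous.tendsto y₀ |>.comp hy).eventually_lt_const hfy
  obtain ⟨N, hN⟩ := eventually_atTop.1 hev
  -- For each n ≥ N, find z ∈ S (x n) with f z < u.
  have hz : ∀ n, ∃ z ∈ S (x (n + N)), f z < u := by
    intro n
    by_contra hcon
    push_neg at hcon
    have hsub : closure (convexHull ℝ (S (x (n + N)))) ⊆ f ⁻¹' Set.Ici u := by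
      apply closure_minimal
      · exact convexHull_min (fun z hz => hcon z hz)
          ((convex_Ici u).linear_preimage (f : EuclideanSpace ℝ (Fin d) →ₗ[ℝ] ℝ))
      · exact (isClosed_Ici).preimage f.continuous
    have := hsub (by rw [← hinf_def]; exact hmem (n + N))
    exact absurd this (not_le.2 (hN (n + N) (by omega)))
  choose z' hz'S hz'f using hz
  -- Boundedness of x, hence of z'.
  obtain ⟨B, hB⟩ : ∃ B, ∀ n, ‖x n‖ ≤ B := by
    obtain ⟨B, hB⟩ := (hx.norm).bddAbove_range
    exact ⟨B, fun n => hB (Set.mem_range_self n)⟩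
  have hz'b : ∀ n, z' n ∈ Metric.closedBall (0 : EuclideanSpace ℝ (Fin d)) (K * (1 + B)) := by
    intro n
    rw [Metric.mem_closedBall, dist_zero_right]
    have h1 := Sbound _ _ (hz'S n)
    have h2 := hB (n + N)
    nlinarith
  obtain ⟨z, -, φ, hφ, hzconv⟩ :=
    (isCompact_closedBall (0 : EuclideanSpace ℝ (Fin d)) (K * (1 + B))).tendsto_subseq hz'b
  have hzmem : z ∈ hinf x₀ := by
    apply core (fun n => x (φ n + N)) (fun n => z' (φ n)) z
    · exact hx.comp ((tendsto_add_atTop_nat N).comp hφ.tendsto_atTop)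
    · exact hzconv
    · exact fun n => hz'S (φ n)
  rw [hinf_def] at hzmem
  have hlt := hfs z hzmem
  have hle : f z ≤ u := by
    have : Tendsto (fun n => f (z' (φ n))) atTop (𝓝 (f z)) :=
      (f.continuous.tendsto z).comp hzconv
    exact le_of_tendsto this (Eventually.of_forall fun n => (hz'f (φ n)).le)
  linarith
end

section
/- Let h : ℝ^d → ℝ^d be Lipschitz with constant L, and suppose h_∞(x) := lim_{c→∞} h(c•x)/c exists for every x ∈ ℝ^d. Then whenever x_n → x, c_n ↑ ∞ (reals ≥ 1), and h(c_n•x_n)/c_n → y, we have y = h_∞(x). Moreover the convergence h_c → h_∞ as c → ∞ is uniform on compact subsets of ℝ^d. -/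
open Filter Topology

theorem stmt_12 (d : ℕ) (h : EuclideanSpace ℝ (Fin d) → EuclideanSpace ℝ (Fin d))
    (L : ℝ) (hL : 0 ≤ L)
    (hlip : ∀ x y, ‖h x - h y‖ ≤ L * ‖x - y‖)
    (hinf : EuclideanSpace ℝ (Fin d) → EuclideanSpace ℝ (Fin d))
    (hlim : ∀ x, Tendsto (fun c : ℝ => c⁻¹ • h (c • x)) atTop (𝓝 (hinf x))) :
    (∀ (c : ℕ → ℝ) (x : ℕ → EuclideanSpace ℝ (Fin d))
        (x₀ y : EuclideanSpace ℝ (Fin d)),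
      (∀ n, 1 ≤ c n) → Tendsto c atTop atTop →
      Tendsto x atTop (𝓝 x₀) →
      Tendsto (fun n => (c n)⁻¹ • h (c n • x n)) atTop (𝓝 y) →
      y = hinf x₀) ∧
    (∀ S : Set (EuclideanSpace ℝ (Fin d)), IsCompact S →
      TendstoUniformlyOn (fun (c : ℝ) (x : EuclideanSpace ℝ (Fin d)) => c⁻¹ • h (c • x))
        hinf atTop S) := by
  -- Uniform Lipschitz bound for the scaled maps
  have hcLip : ∀ c : ℝ, 1 ≤ c → ∀ x y : EuclideanSpace ℝ (Fin d),
      dist (c⁻¹ • h (c • x)) (c⁻¹ • h (c • y)) ≤ L * dist x y := by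
    intro c hc x y
    have hc0 : (0:ℝ) < c := lt_of_lt_of_le one_pos hc
    rw [dist_eq_norm, ← smul_sub, norm_smul, dist_eq_norm]
    have h1 : ‖h (c • x) - h (c • y)‖ ≤ L * ‖c • x - c • y‖ := hlip _ _
    have h2 : ‖c • x - c • y‖ = c * ‖x - y‖ := by
      rw [← smul_sub, norm_smul, Real.norm_of_nonneg hc0.le]
    have h3 : ‖c⁻¹‖ = c⁻¹ := Real.norm_of_nonneg (inv_nonneg.2 hc0.le)
    rw [h3]
    calc c⁻¹ * ‖h (c • x) - h (c • y)‖ ≤ c⁻¹ * (L * (c * ‖x - y‖)) := by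
          apply mul_le_mul_of_nonneg_left _ (inv_nonneg.2 hc0.le)
          rw [← h2]; exact h1
      _ = L * ‖x - y‖ := by field_simp
  -- hinf is L-Lipschitz
  have hinfLip : ∀ x y : EuclideanSpace ℝ (Fin d),
      dist (hinf x) (hinf y) ≤ L * dist x y := by
    intro x y
    have ht : Tendsto (fun c : ℝ => dist (c⁻¹ • h (c • x)) (c⁻¹ • h (c • y))) atTop
        (𝓝 (dist (hinf x) (hinf y))) := ((hlim x).dist (hlim y))
    refine le_of_tendsto ht ?_
    filter_upwards [eventually_ge_atTop (1:ℝ)] with c hc using hcLip c hc x y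
  constructor
  · intro c x x₀ y hc1 hc hx hy
    have key : Tendsto (fun n => (c n)⁻¹ • h (c n • x n)) atTop (𝓝 (hinf x₀)) := by
      rw [tendsto_iff_dist_tendsto_zero]
      have bnd : ∀ n, dist ((c n)⁻¹ • h (c n • x n)) (hinf x₀) ≤
          L * dist (x n) x₀ + dist ((c n)⁻¹ • h (c n • x₀)) (hinf x₀) := by
        intro n
        calc dist ((c n)⁻¹ • h (c n • x n)) (hinf x₀)
            ≤ dist ((c n)⁻¹ • h (c n • x n)) ((c n)⁻¹ • h (c n • x₀))
              + dist ((c n)⁻¹ • h (c n • x₀)) (hinf x₀) := dist_triangle _ _ _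
          _ ≤ L * dist (x n) x₀ + dist ((c n)⁻¹ • h (c n • x₀)) (hinf x₀) := by
              gcongr; exact hcLip _ (hc1 n) _ _
      have t1 : Tendsto (fun n => L * dist (x n) x₀) atTop (𝓝 0) := by
        have := (tendsto_iff_dist_tendsto_zero.1 hx).const_mul L
        simpa using this
      have t2 : Tendsto (fun n => dist ((c n)⁻¹ • h (c n • x₀)) (hinf x₀)) atTop (𝓝 0) :=
        tendsto_iff_dist_tendsto_zero.1 ((hlim x₀).comp hc)
      have := t1.add t2
      rw [add_zero] at this
      exact squeeze_zero (fun n => dist_nonneg) bnd this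
    exact tendsto_nhds_unique hy key
  · intro S hS
    rw [Metric.tendstoUniformlyOn_iff]
    intro ε hε
    set δ : ℝ := ε / (3 * (L + 1)) with hδdef
    have hδ : 0 < δ := by positivity
    have hcov : S ⊆ ⋃ z : S, Metric.ball (z : EuclideanSpace ℝ (Fin d)) δ := by
      intro x hx
      exact Set.mem_iUnion.2 ⟨⟨x, hx⟩, Metric.mem_ball_self hδ⟩
    obtain ⟨t, ht⟩ := hS.elim_finite_subcover
      (fun z : S => Metric.ball (z : EuclideanSpace ℝ (Fin d)) δ)
      (fun z => Metric.isOpen_ball) hcov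
    have hev : ∀ᶠ c in (atTop : Filter ℝ), (1:ℝ) ≤ c ∧
        ∀ i ∈ t, dist ((c:ℝ)⁻¹ • h (c • (i : EuclideanSpace ℝ (Fin d)))) (hinf i) < ε / 3 := by
      refine (eventually_ge_atTop (1:ℝ)).and ?_
      rw [eventually_all_finset]
      intro i _
      have := Metric.tendsto_nhds.1 (hlim (i : EuclideanSpace ℝ (Fin d))) (ε/3) (by positivity)
      filter_upwards [this] with c hc using hc
    filter_upwards [hev] with c ⟨hc1, hct⟩ x hx
    obtain ⟨i, hit, hxi⟩ : ∃ i ∈ t, x ∈ Metric.ball (i : EuclideanSpace ℝ (Fin d)) δ := by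
      have := ht hx
      simpa using this
    have hLδ : L * δ < ε / 3 := by
      rw [hδdef, mul_div_assoc', div_lt_div_iff₀ (by positivity : (0:ℝ) < 3*(L+1)) (by norm_num : (0:ℝ) < 3)]
      nlinarith
    have hd1 : dist (hinf x) (hinf i) ≤ L * δ :=
      le_trans (hinfLip x i) (by
        have := (Metric.mem_ball.1 hxi).le
        nlinarith [dist_nonneg (x := x) (y := (i : EuclideanSpace ℝ (Fin d)))])
    have hd3 : dist ((c:ℝ)⁻¹ • h (c • (i : EuclideanSpace ℝ (Fin d)))) (c⁻¹ • h (c • x)) ≤ L * δ :=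
      le_trans (hcLip c hc1 _ _) (by
        have := (Metric.mem_ball.1 hxi).le
        rw [dist_comm] at this
        nlinarith [dist_nonneg (x := (i : EuclideanSpace ℝ (Fin d))) (y := x)])
    calc dist (hinf x) (c⁻¹ • h (c • x))
        ≤ dist (hinf x) (hinf i) + dist (hinf i) ((c:ℝ)⁻¹ • h (c • (i : EuclideanSpace ℝ (Fin d))))
          + dist ((c:ℝ)⁻¹ • h (c • (i : EuclideanSpace ℝ (Fin d)))) (c⁻¹ • h (c • x)) :=
          dist_triangle4 _ _ _ _
      _ ≤ L * δ + ε/3 + L * δ := by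
          have hd2 : dist (hinf (i : EuclideanSpace ℝ (Fin d)))
              ((c:ℝ)⁻¹ • h (c • (i : EuclideanSpace ℝ (Fin d)))) ≤ ε/3 := by
            rw [dist_comm]; exact (hct i hit).le
          linarith
      _ < ε := by linarith
end

section
/- Let h : ℝ^d → ℝ^d be Lipschitz with constant L, h_c(x) := h(c•x)/c, and define h_∞(x) := closedConvexHull({y : liminf_{n→∞} ‖h_n(x) − y‖ = 0}). Then the sequential property (A5) holds for the singleton-valued maps {h_c}: if integers c_n ↑ ∞, x_n → x, and h_{c_n}(x_n) → y, then y ∈ h_∞(x). -/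
open Filter Topology

theorem stmt_16 (d : ℕ) (h : EuclideanSpace ℝ (Fin d) → EuclideanSpace ℝ (Fin d))
    (L : ℝ) (hL : 0 ≤ L)
    (hlip : ∀ x y, ‖h x - h y‖ ≤ L * ‖x - y‖)
    (hinf : EuclideanSpace ℝ (Fin d) → Set (EuclideanSpace ℝ (Fin d)))
    (hinf_def : ∀ x, hinf x = closure (convexHull ℝ
      {y | liminf (fun n : ℕ => ‖((n + 1 : ℝ))⁻¹ • h ((n + 1 : ℝ) • x) - y‖) atTop = 0})) :
    ∀ (c : ℕ → ℕ) (x : ℕ → EuclideanSpace ℝ (Fin d))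
      (x₀ y : EuclideanSpace ℝ (Fin d)),
      StrictMono c → (∀ n, 1 ≤ c n) →
      Tendsto x atTop (𝓝 x₀) →
      Tendsto (fun n => ((c n : ℝ))⁻¹ • h ((c n : ℝ) • x n)) atTop (𝓝 y) →
      y ∈ hinf x₀ := by
  intro c x x₀ y hc hc1 hx hy
  set f : ℕ → ℝ := fun n : ℕ => ‖((n + 1 : ℝ))⁻¹ • h ((n + 1 : ℝ) • x₀) - y‖ with hf
  -- the subsequence f (c k - 1) tends to 0
  have hcast : ∀ k, ((c k - 1 : ℕ) + 1 : ℝ) = (c k : ℝ) := by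
    intro k
    have : (c k - 1) + 1 = c k := Nat.sub_add_cancel (hc1 k)
    exact_mod_cast congrArg (Nat.cast : ℕ → ℝ) this
  have hsub : Tendsto (fun k => f (c k - 1)) atTop (𝓝 0) := by
    have hbound : ∀ k, f (c k - 1) ≤
        L * ‖x₀ - x k‖ + ‖((c k : ℝ))⁻¹ • h ((c k : ℝ) • x k) - y‖ := by
      intro k
      have hck : (0 : ℝ) < (c k : ℝ) := by exact_mod_cast hc1 k
      have h1 : f (c k - 1) = ‖((c k : ℝ))⁻¹ • h ((c k : ℝ) • x₀) - y‖ := by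
        simp only [hf, hcast k]
      rw [h1]
      have htri : ‖((c k : ℝ))⁻¹ • h ((c k : ℝ) • x₀) - y‖ ≤
          ‖((c k : ℝ))⁻¹ • h ((c k : ℝ) • x₀) - ((c k : ℝ))⁻¹ • h ((c k : ℝ) • x k)‖ +
          ‖((c k : ℝ))⁻¹ • h ((c k : ℝ) • x k) - y‖ := norm_sub_le_norm_sub_add_norm_sub _ _ _
      refine htri.trans (add_le_add_left ?_ _)
      rw [← smul_sub, norm_smul]
      have hlipk := hlip ((c k : ℝ) • x₀) ((c k : ℝ) • x k)
      rw [← smul_sub, norm_smul] at hlipk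
      calc ‖((c k : ℝ))⁻¹‖ * ‖h ((c k : ℝ) • x₀) - h ((c k : ℝ) • x k)‖
          ≤ ‖((c k : ℝ))⁻¹‖ * (L * (‖(c k : ℝ)‖ * ‖x₀ - x k‖)) := by
            apply mul_le_mul_of_nonneg_left hlipk (norm_nonneg _)
        _ = L * ‖x₀ - x k‖ := by
            rw [Real.norm_eq_abs, Real.norm_eq_abs, abs_of_pos hck,
              abs_of_pos (inv_pos.mpr hck)]
            field_simp
    have hrhs : Tendsto (fun k => L * ‖x₀ - x k‖ +
        ‖((c k : ℝ))⁻¹ • h ((c k : ℝ) • x k) - y‖) atTop (𝓝 0) := by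
      have h1 : Tendsto (fun k => L * ‖x₀ - x k‖) atTop (𝓝 0) := by
        have := (hx.const_sub x₀).norm
        simpa using (this.const_mul L)
      have h2 : Tendsto (fun k => ‖((c k : ℝ))⁻¹ • h ((c k : ℝ) • x k) - y‖)
          atTop (𝓝 0) := by
        simpa using (hy.sub (tendsto_const_nhds (x := y))).norm
      simpa using h1.add h2
    have hnn : ∀ k, 0 ≤ f (c k - 1) := fun k => norm_nonneg _
    exact squeeze_zero hnn hbound hrhs
  have hbdd : IsBoundedUnder (· ≥ ·) atTop f :=
    isBoundedUnder_of ⟨0, fun n => norm_nonneg _⟩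
  have hfreq : ∀ ε : ℝ, 0 < ε → ∃ᶠ n in atTop, f n ≤ ε := by
    intro ε hε
    have hev : ∀ᶠ k in atTop, f (c k - 1) ≤ ε := by
      filter_upwards [hsub.eventually (ge_mem_nhds hε)] with k hk using hk
    have hmono : Tendsto (fun k => c k - 1) atTop atTop := by
      apply tendsto_atTop_atTop_of_monotone
      · intro a b hab
        exact Nat.sub_le_sub_right (hc.monotone hab) 1
      · intro b
        obtain ⟨k, hk⟩ := (tendsto_atTop_atTop.mp hc.tendsto_atTop) (b + 1)
        have := hk k le_rfl
        exact ⟨k, by omega⟩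
    exact (hmono.frequently (hev.frequently))
  have hliminf : liminf f atTop = 0 := by
    refine le_antisymm ?_ ?_
    · refine le_of_forall_pos_le_add ?_
      intro ε hε
      simpa using (liminf_le_of_frequently_le (hfreq ε hε) hbdd).trans (by linarith)
    · exact le_liminf_of_le (IsCoboundedUnder.of_frequently_le (hfreq 1 one_pos))
        (Eventually.of_forall fun n => norm_nonneg _)
  rw [hinf_def]
  exact subset_closure (subset_convexHull ℝ _ hliminf)
end
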